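/- arXiv:1510.03596 — 4 statements merged into one kernel-verified Lean document; each statement's English description precedes it below -/
import Mathlib

section
/- For fixed λ > 0, the function SNR ↦ (λ/2)^{3/2}(√(1 + 2·SNR/λ) − 1)²/SNR is strictly increasing on (0, ∞). -/
open Real

/-- For fixed `λ > 0`, the asymptotic Sharpe ratio of the optimal strategy under partial
information, `SNR ↦ (λ/2)^{3/2} (√(1 + 2·SNR/λ) - 1)² / SNR`, is strictly increasing
on `(0, ∞)`. -/
theorem partialInfoSharpe_strictMono_in_SNR (lam : ℝ) (hlam : 0 < lam) :
    StrictMonoOn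
      (fun SNR : ℝ =>
        (lam / 2) ^ ((3 : ℝ) / 2) * (Real.sqrt (1 + 2 * SNR / lam) - 1) ^ 2 / SNR)
      (Set.Ioi 0) := by
  have hC : (0:ℝ) < (lam / 2) ^ ((3:ℝ)/2) := Real.rpow_pos_of_pos (by linarith) _
  intro x hx y hy hxy
  simp only [Set.mem_Ioi] at hx hy
  have hax : (0:ℝ) < 1 + 2 * x / lam := by positivity
  have hay : (0:ℝ) < 1 + 2 * y / lam := by positivity
  set a := Real.sqrt (1 + 2 * x / lam) with ha
  set b := Real.sqrt (1 + 2 * y / lam) with hb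
  have ha1 : 1 < a := by
    rw [ha]
    nlinarith [Real.sq_sqrt hax.le, Real.sqrt_nonneg (1 + 2 * x / lam),
      show (0:ℝ) < 2 * x / lam by positivity]
  have hb1 : 1 < b := by
    rw [hb]
    nlinarith [Real.sq_sqrt hay.le, Real.sqrt_nonneg (1 + 2 * y / lam),
      show (0:ℝ) < 2 * y / lam by positivity]
  have hab : a < b := by
    apply Real.sqrt_lt_sqrt hax.le
    have : 2 * x / lam < 2 * y / lam := by gcongr
    linarith
  have hasq : a ^ 2 = 1 + 2 * x / lam := Real.sq_sqrt hax.le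
  have hbsq : b ^ 2 = 1 + 2 * y / lam := Real.sq_sqrt hay.le
  have hxa : x = lam * (a ^ 2 - 1) / 2 := by
    field_simp at hasq
    linarith
  have hyb : y = lam * (b ^ 2 - 1) / 2 := by
    field_simp at hbsq
    linarith
  have key : (a - 1) ^ 2 * y < (b - 1) ^ 2 * x := by
    rw [hxa, hyb]
    nlinarith [mul_pos (sub_pos.2 ha1) (sub_pos.2 hb1), sub_pos.2 hab,
      mul_pos (mul_pos (sub_pos.2 ha1) (sub_pos.2 hb1)) (sub_pos.2 hab)]
  simp only
  rw [div_lt_div_iff₀ hx hy]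
  nlinarith [mul_lt_mul_of_pos_left key hC]
end

section
/- For fixed SNR > 0, the function λ ↦ SR_∞(SNR, λ) = (λ/2)^{3/2}(√(1 + 2·SNR/λ) − 1)²/SNR on (0,∞) is strictly increasing for λ < (2/3)·SNR and strictly decreasing for λ > (2/3)·SNR. Its maximum is attained at λ = (2/3)·SNR and equals √SNR / 3^{3/2}. -/
/-!
Put `β = √(1 + 2·SNR/λ)`. Then `λ/2 = SNR/(β² - 1)`, which turns `SR_∞(SNR, λ)` into
`√(SNR · (β - 1)/(β + 1)³)`. The map `λ ↦ β` is strictly decreasing on `(0, ∞)` and passes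
through `β = 2` exactly at `λ = (2/3)·SNR`, while the profile `(β - 1)/(β + 1)³` increases on
`(-1, 2]`, decreases on `[2, ∞)` and has maximum `1/27` at `β = 2`. Composing gives the
unimodality, and `√(SNR/27) = √SNR / 3^{3/2}` is the maximal value.
-/

open Set

noncomputable def sharpeProfile (t : ℝ) : ℝ := (t - 1) / (t + 1) ^ 3

theorem sharpeProfile_nonneg {t : ℝ} (ht : 1 ≤ t) : 0 ≤ sharpeProfile t :=
  div_nonneg (sub_nonneg.2 ht) (by positivity)

theorem sharpeProfile_sub_sharpeProfile {a b : ℝ} (ha : a ≠ -1) (hb : b ≠ -1) :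
    sharpeProfile b - sharpeProfile a =
      (b - a) * (2 * ((a + 1) ^ 2 + (a + 1) * (b + 1) + (b + 1) ^ 2)
        - (a + 1) * (b + 1) * (a + b + 2)) / ((a + 1) ^ 3 * (b + 1) ^ 3) := by
  have ha' : a + 1 ≠ 0 := by contrapose! ha; linarith
  have hb' : b + 1 ≠ 0 := by contrapose! hb; linarith
  unfold sharpeProfile
  field_simp
  ring

theorem strictMonoOn_sharpeProfile : StrictMonoOn sharpeProfile (Ioc (-1) 2) := by
  rintro a ⟨ha, -⟩ b ⟨-, hb⟩ hab
  have hx : 0 < a + 1 := by linarith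
  have hy : 0 < b + 1 := by linarith
  rw [← sub_pos, sharpeProfile_sub_sharpeProfile (by linarith) (by linarith)]
  refine div_pos (mul_pos (sub_pos.2 hab) ?_) (by positivity)
  rcases le_or_gt a 1 with ha1 | ha1
  · nlinarith [mul_pos hx hy]
  -- For `a > 1` the bracket equals `(2 - a)(a + 7) + (a - 1)(2 - b)(a + b + 5)`.
  · nlinarith [mul_nonneg (mul_nonneg (sub_pos.2 ha1).le (sub_nonneg.2 hb))
      (by linarith : (0 : ℝ) ≤ a + b + 5),
      mul_pos (by linarith : (0 : ℝ) < 2 - a) (by linarith : (0 : ℝ) < a + 7)]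

theorem strictAntiOn_sharpeProfile : StrictAntiOn sharpeProfile (Ici 2) := by
  rintro a (ha : 2 ≤ a) b (hb : 2 ≤ b) hab
  rw [← sub_neg, sharpeProfile_sub_sharpeProfile (by linarith) (by linarith)]
  refine div_neg_of_neg_of_pos (mul_neg_of_pos_of_neg (sub_pos.2 hab) ?_) (by positivity)
  nlinarith [sq_pos_of_pos (sub_pos.2 hab), mul_nonneg (sub_nonneg.2 ha) (sub_nonneg.2 hb)]

theorem sharpeProfile_le_sharpeProfile_two {t : ℝ} (ht : -1 < t) :
    sharpeProfile t ≤ sharpeProfile 2 := by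
  unfold sharpeProfile
  rw [div_le_div_iff₀ (pow_pos (by linarith) 3) (by norm_num)]
  nlinarith [mul_nonneg (sq_nonneg (t - 2)) (by linarith : (0 : ℝ) ≤ t + 7)]

section

variable {S : ℝ}

theorem strictMonoOn_sqrt_mul_sharpeProfile (hS : 0 < S) :
    StrictMonoOn (fun t => √(S * sharpeProfile t)) (Icc 1 2) :=
  fun a ha b hb hab => Real.sqrt_lt_sqrt (mul_nonneg hS.le (sharpeProfile_nonneg ha.1))
    (mul_lt_mul_of_pos_left
      (strictMonoOn_sharpeProfile ⟨by linarith [ha.1], ha.2⟩ ⟨by linarith [hb.1], hb.2⟩ hab) hS)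

theorem strictAntiOn_sqrt_mul_sharpeProfile (hS : 0 < S) :
    StrictAntiOn (fun t => √(S * sharpeProfile t)) (Ici 2) :=
  fun a ha b (hb : 2 ≤ b) hab =>
    Real.sqrt_lt_sqrt (mul_nonneg hS.le (sharpeProfile_nonneg (by linarith)))
      (mul_lt_mul_of_pos_left (strictAntiOn_sharpeProfile ha hb hab) hS)

end

theorem rpow_three_halves_sq {x : ℝ} (hx : 0 ≤ x) : (x ^ ((3 : ℝ) / 2)) ^ 2 = x ^ 3 := by
  rw [← Real.rpow_mul_natCast hx]
  norm_num

theorem sqrt_mul_sharpeProfile_two {S : ℝ} (hS : 0 < S) :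
    √(S * sharpeProfile 2) = √S / 3 ^ ((3 : ℝ) / 2) := by
  rw [Real.sqrt_eq_iff_eq_sq (mul_nonneg hS.le (sharpeProfile_nonneg one_le_two)) (by positivity),
    div_pow, Real.sq_sqrt hS.le, rpow_three_halves_sq zero_le_three]
  norm_num [sharpeProfile]
  ring

section

variable {c x : ℝ}

theorem one_lt_sqrt_one_add_div (hc : 0 < c) (hx : 0 < x) : 1 < √(1 + c / x) := by
  rw [Real.lt_sqrt zero_le_one]
  have := div_pos hc hx
  linarith

theorem strictAntiOn_sqrt_one_add_div (hc : 0 < c) :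
    StrictAntiOn (fun x => √(1 + c / x)) (Ioi 0) :=
  fun x (hx : 0 < x) y (hy : 0 < y) hxy =>
    Real.sqrt_lt_sqrt (by have := div_pos hc hy; linarith)
      (add_lt_add_right (div_lt_div_of_pos_left hc hx hxy) 1)

theorem two_le_sqrt_one_add_div (hx : 0 < x) (h : 3 * x ≤ c) : 2 ≤ √(1 + c / x) := by
  rw [Real.le_sqrt' zero_lt_two]
  have : 3 ≤ c / x := by rw [le_div_iff₀ hx]; linarith
  linarith

theorem sqrt_one_add_div_le_two (hx : 0 < x) (h : c ≤ 3 * x) : √(1 + c / x) ≤ 2 := by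
  rw [Real.sqrt_le_left zero_le_two]
  have : c / x ≤ 3 := by rw [div_le_iff₀ hx]; linarith
  linarith

end

theorem sharpe_eq_sqrt_mul_sharpeProfile {S lam : ℝ} (hS : 0 < S) (hlam : 0 < lam) :
    (lam / 2) ^ ((3 : ℝ) / 2) * (√(1 + 2 * S / lam) - 1) ^ 2 / S
      = √(S * sharpeProfile √(1 + 2 * S / lam)) := by
  have hβ1 := one_lt_sqrt_one_add_div (by positivity : 0 < 2 * S) hlam
  have hβsq := Real.sq_sqrt (by positivity : 0 ≤ 1 + 2 * S / lam)
  set β := √(1 + 2 * S / lam)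
  have hSβ : S = (β - 1) * (β + 1) * (lam / 2) := by
    field_simp at hβsq
    linear_combination -hβsq / 2
  symm
  rw [Real.sqrt_eq_iff_eq_sq (mul_nonneg hS.le (sharpeProfile_nonneg hβ1.le)) (by positivity),
    div_pow, mul_pow, rpow_three_halves_sq (by positivity)]
  unfold sharpeProfile
  rw [hSβ]
  field_simp

/-- For fixed `SNR > 0`, the map `λ ↦ SR_∞(SNR,λ) = (λ/2)^{3/2}(√(1+2·SNR/λ)-1)²/SNR`
on `(0,∞)` is strictly increasing for `λ < (2/3)·SNR` and strictly decreasing for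
`λ > (2/3)·SNR`; its maximum is attained at `λ = (2/3)·SNR` and equals `√SNR/3^{3/2}`. -/
theorem partialInfoSharpe_unimodal_in_lambda (SNR : ℝ) (hSNR : 0 < SNR) :
    StrictMonoOn
      (fun lam : ℝ =>
        (lam / 2) ^ ((3 : ℝ) / 2) * (Real.sqrt (1 + 2 * SNR / lam) - 1) ^ 2 / SNR)
      (Set.Ioc 0 (2 / 3 * SNR)) ∧
    StrictAntiOn
      (fun lam : ℝ =>
        (lam / 2) ^ ((3 : ℝ) / 2) * (Real.sqrt (1 + 2 * SNR / lam) - 1) ^ 2 / SNR)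
      (Set.Ici (2 / 3 * SNR)) ∧
    ((2 / 3 * SNR / 2) ^ ((3 : ℝ) / 2)
        * (Real.sqrt (1 + 2 * SNR / (2 / 3 * SNR)) - 1) ^ 2 / SNR
      = Real.sqrt SNR / 3 ^ ((3 : ℝ) / 2)) ∧
    (∀ lam : ℝ, 0 < lam →
      (lam / 2) ^ ((3 : ℝ) / 2) * (Real.sqrt (1 + 2 * SNR / lam) - 1) ^ 2 / SNR
        ≤ Real.sqrt SNR / 3 ^ ((3 : ℝ) / 2)) := by
  have h2S : 0 < 2 * SNR := by positivity
  have hcrit : 0 < 2 / 3 * SNR := by positivity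
  have hsub : Ici (2 / 3 * SNR) ⊆ Ioi 0 := Ici_subset_Ioi.2 hcrit
  have hrepr : EqOn ((fun t => √(SNR * sharpeProfile t)) ∘ fun lam => √(1 + 2 * SNR / lam))
      (fun lam => (lam / 2) ^ ((3 : ℝ) / 2) * (√(1 + 2 * SNR / lam) - 1) ^ 2 / SNR) (Ioi 0) :=
    fun lam hlam => (sharpe_eq_sqrt_mul_sharpeProfile hSNR hlam).symm
  have hβ : √(1 + 2 * SNR / (2 / 3 * SNR)) = 2 := by
    rw [Real.sqrt_eq_iff_eq_sq (by positivity) zero_le_two]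
    field_simp
    norm_num
  refine ⟨?_, ?_, ?_, fun lam hlam => ?_⟩
  · refine ((strictAntiOn_sqrt_mul_sharpeProfile hSNR).comp
      ((strictAntiOn_sqrt_one_add_div h2S).mono Ioc_subset_Ioi_self) fun lam hlam =>
        two_le_sqrt_one_add_div hlam.1 (by linarith [hlam.2])).congr
      (hrepr.mono Ioc_subset_Ioi_self)
  · refine ((strictMonoOn_sqrt_mul_sharpeProfile hSNR).comp_strictAntiOn
      ((strictAntiOn_sqrt_one_add_div h2S).mono hsub) fun lam (hlam : _ ≤ lam) => ?_).congr
      (hrepr.mono hsub)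
    have hlam0 : 0 < lam := hcrit.trans_le hlam
    exact ⟨(one_lt_sqrt_one_add_div h2S hlam0).le, sqrt_one_add_div_le_two hlam0 (by linarith)⟩
  · rw [sharpe_eq_sqrt_mul_sharpeProfile hSNR hcrit, hβ, sqrt_mul_sharpeProfile_two hSNR]
  · rw [sharpe_eq_sqrt_mul_sharpeProfile hSNR hlam, ← sqrt_mul_sharpeProfile_two hSNR]
    exact Real.sqrt_le_sqrt (mul_le_mul_of_nonneg_left
      (sharpeProfile_le_sharpeProfile_two (by linarith [Real.sqrt_nonneg (1 + 2 * SNR / lam)]))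
      hSNR.le)
end

section
/- Define the partial information factor PIF(SNR, λ) = (λ/SNR)^{3/2} (√(1 + 2·SNR/λ) − 1)² / √2 for SNR, λ > 0. Then PIF(SNR, λ) ≤ 2/3^{3/2}, with equality if and only if λ = (2/3)·SNR. -/
open Real

set_option maxHeartbeats 1000000

/-- The partial information factor:
`PIF(SNR, λ) = (λ/SNR)^{3/2} (√(1 + 2·SNR/λ) - 1)² / √2`. -/
noncomputable def PIF (SNR lam : ℝ) : ℝ :=
  (lam / SNR) ^ ((3 : ℝ) / 2) * (Real.sqrt (1 + 2 * SNR / lam) - 1) ^ 2 / Real.sqrt 2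

/-- For `SNR, λ > 0`: `PIF(SNR, λ) ≤ 2/3^{3/2}`, with equality iff `λ = (2/3)·SNR`. -/
theorem PIF_le (SNR lam : ℝ) (hSNR : 0 < SNR) (hlam : 0 < lam) :
    PIF SNR lam ≤ 2 / 3 ^ ((3 : ℝ) / 2) ∧
    (PIF SNR lam = 2 / 3 ^ ((3 : ℝ) / 2) ↔ lam = 2 / 3 * SNR) := by
  set x : ℝ := lam / SNR with hxdef
  have hx : 0 < x := div_pos hlam hSNR
  set t : ℝ := 1 + 2 * SNR / lam with htdef
  have ht : 1 < t := by
    have : 0 < 2 * SNR / lam := by positivity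
    simp [htdef]; linarith
  set s : ℝ := Real.sqrt t with hsdef
  have hs : 1 < s := by
    rw [show (1:ℝ) = Real.sqrt 1 from (Real.sqrt_one).symm, hsdef]
    exact Real.sqrt_lt_sqrt (by norm_num) ht
  have hs2 : s ^ 2 = t := Real.sq_sqrt (by linarith)
  -- the key algebraic relation
  have hxt : x * (t - 1) = 2 := by
    rw [hxdef, htdef]
    field_simp
    ring
  set u : ℝ := x * (s - 1) with hudef
  have hu : u * (s + 1) = 2 := by
    have : u * (s + 1) = x * (s ^ 2 - 1) := by rw [hudef]; ring
    rw [this, hs2]; exact hxt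
  have hu_pos : 0 < u := mul_pos hx (by linarith)
  -- squared quantities
  have hx32 : (x ^ ((3:ℝ)/2)) ^ 2 = x ^ 3 := by
    rw [← Real.rpow_natCast (x ^ ((3:ℝ)/2)) 2, ← Real.rpow_mul hx.le]
    rw [show ((3:ℝ)/2 * ((2:ℕ):ℝ)) = ((3:ℕ):ℝ) by norm_num, Real.rpow_natCast]
  have h27 : ((3:ℝ) ^ ((3:ℝ)/2)) ^ 2 = 27 := by
    rw [← Real.rpow_natCast ((3:ℝ) ^ ((3:ℝ)/2)) 2, ← Real.rpow_mul (by norm_num : (0:ℝ) ≤ 3)]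
    rw [show ((3:ℝ)/2 * ((2:ℕ):ℝ)) = ((3:ℕ):ℝ) by norm_num, Real.rpow_natCast]
    norm_num
  have h3pos : (0:ℝ) < (3:ℝ) ^ ((3:ℝ)/2) := Real.rpow_pos_of_pos (by norm_num) _
  have hRHSpos : (0:ℝ) < 2 / 3 ^ ((3:ℝ)/2) := by positivity
  have hRHS2 : (2 / (3:ℝ) ^ ((3:ℝ)/2)) ^ 2 = 4 / 27 := by
    rw [div_pow, h27]; norm_num
  have hPIFeq : PIF SNR lam = x ^ ((3:ℝ)/2) * (s - 1) ^ 2 / Real.sqrt 2 := by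
    rw [PIF, hxdef, hsdef, htdef]
  have hPIF_nonneg : 0 ≤ PIF SNR lam := by
    rw [hPIFeq]
    have h1 : (0:ℝ) < x ^ ((3:ℝ)/2) := Real.rpow_pos_of_pos hx _
    positivity
  have hPIF2 : PIF SNR lam ^ 2 = u ^ 3 * (s - 1) / 2 := by
    rw [hPIFeq, div_pow, mul_pow, hx32, Real.sq_sqrt (by norm_num : (0:ℝ) ≤ 2), hudef]
    ring
  have h8 : u ^ 3 * (s + 1) ^ 3 = 8 := by
    have : u ^ 3 * (s + 1) ^ 3 = (u * (s + 1)) ^ 3 := by ring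
    rw [this, hu]; norm_num
  have hineq : 27 * (s - 1) ≤ (s + 1) ^ 3 := by nlinarith [sq_nonneg (s - 2)]
  have hu3 : (0:ℝ) < u ^ 3 := pow_pos hu_pos 3
  have hkey : u ^ 3 * (s - 1) / 2 ≤ 4 / 27 := by
    nlinarith [mul_le_mul_of_nonneg_left hineq hu3.le, h8]
  have hsq_le : PIF SNR lam ^ 2 ≤ (2 / (3:ℝ) ^ ((3:ℝ)/2)) ^ 2 := by
    rw [hPIF2, hRHS2]; exact hkey
  have hle : PIF SNR lam ≤ 2 / 3 ^ ((3:ℝ)/2) := by nlinarith [hPIF_nonneg, hRHSpos, hsq_le]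
  refine ⟨hle, ?_, ?_⟩
  · -- equality → lam = 2/3 * SNR
    intro heq
    have hsq : u ^ 3 * (s - 1) / 2 = 4 / 27 := by rw [← hPIF2, ← hRHS2, heq]
    have hfac : u ^ 3 * ((s + 1) ^ 3 - 27 * (s - 1)) = 0 := by nlinarith [hsq, h8]
    have h0 : (s + 1) ^ 3 - 27 * (s - 1) = 0 := by
      rcases mul_eq_zero.mp hfac with h | h
      · exact absurd h hu3.ne'
      · exact h
    have hfac2 : (s - 2) ^ 2 * (s + 7) = 0 := by nlinarith [h0]
    have hseq : s = 2 := by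
      rcases mul_eq_zero.mp hfac2 with h | h
      · have h2 : s - 2 = 0 := by
          have := sq_eq_zero_iff.mp h
          linarith [this]
        linarith
      · linarith
    have hteq : t = 4 := by rw [← hs2, hseq]; norm_num
    have h2 : 2 * SNR / lam = 3 := by
      have h' := hteq; rw [htdef] at h'; linarith
    have h3 : 2 * SNR = 3 * lam := by
      field_simp at h2; linarith
    linarith
  · -- lam = 2/3 * SNR → equality
    intro heq
    have hteq : t = 4 := by
      rw [htdef, heq]
      have hS : SNR ≠ 0 := hSNR.ne'
      field_simp
      ring
    have hseq : s = 2 := by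
      rw [hsdef, hteq]
      rw [show (4:ℝ) = 2 ^ 2 by norm_num]
      exact Real.sqrt_sq (by norm_num)
    have hueq : u = 2 / 3 := by
      have := hu; rw [hseq] at this; linarith
    have hsq : PIF SNR lam ^ 2 = (2 / (3:ℝ) ^ ((3:ℝ)/2)) ^ 2 := by
      rw [hPIF2, hRHS2, hueq, hseq]; norm_num
    nlinarith [hPIF_nonneg, hRHSpos, hsq]
end

section
/- For fixed λ > 0, the function SNR ↦ PIF(SNR, λ) = (λ/SNR)^{3/2}(√(1 + 2·SNR/λ) − 1)²/√2 is strictly increasing on (0, (3/2)λ) and strictly decreasing on ((3/2)λ, ∞). -/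
/-!
Substituting `β = √(1 + 2·SNR/λ)`, an increasing function of `SNR` with `β = 2` exactly at
`SNR = (3/2)λ`, turns the PIF into `2 √((β - 1)/(β + 1)³)`. Cross-multiplying, the sign of
`g b - g a` for `g β = (β - 1)/(β + 1)³` and `a < b` is that of `2(u² + uv + v²) - uv(u + v)`
with `u = a + 1`, `v = b + 1`, which vanishes at `u = v = 3` and is positive for `u, v ∈ [2, 3]`
and negative for `u, v ≥ 3`.
-/

open Real Set

lemma sub_one_mul_add_one_cube_sub_sub_one_mul_add_one_cube (a b : ℝ) :
    (b - 1) * (a + 1) ^ 3 - (a - 1) * (b + 1) ^ 3 =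
      (b - a) * (2 * ((a + 1) ^ 2 + (a + 1) * (b + 1) + (b + 1) ^ 2)
        - (a + 1) * (b + 1) * (a + b + 2)) := by
  ring

lemma strictMonoOn_sub_one_div_add_one_cube :
    StrictMonoOn (fun b : ℝ => (b - 1) / (b + 1) ^ 3) (Icc 1 2) := by
  rintro a ⟨ha, -⟩ b ⟨-, hb⟩ hab
  rw [div_lt_div_iff₀ (pow_pos (by linarith) 3) (pow_pos (by linarith) 3), ← sub_pos,
    sub_one_mul_add_one_cube_sub_sub_one_mul_add_one_cube]
  have h2b := sub_nonneg.mpr hb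
  have ha1 := sub_nonneg.mpr ha
  exact mul_pos (sub_pos.mpr hab)
    (by nlinarith [mul_nonneg h2b ha1, mul_nonneg (mul_nonneg h2b ha1) h2b])

lemma strictAntiOn_sub_one_div_add_one_cube :
    StrictAntiOn (fun b : ℝ => (b - 1) / (b + 1) ^ 3) (Ici 2) := by
  rintro a (ha : 2 ≤ a) b - hab
  rw [div_lt_div_iff₀ (pow_pos (by linarith) 3) (pow_pos (by linarith) 3), ← sub_neg,
    sub_one_mul_add_one_cube_sub_sub_one_mul_add_one_cube]
  have ha2 := sub_nonneg.mpr ha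
  exact mul_neg_of_pos_of_neg (sub_pos.mpr hab)
    (by nlinarith [mul_nonneg ha2 ha2, mul_nonneg (mul_nonneg ha2 ha2) ha2])

lemma strictMonoOn_two_mul_sqrt_sub_one_div_add_one_cube :
    StrictMonoOn (fun b : ℝ => 2 * √((b - 1) / (b + 1) ^ 3)) (Icc 1 2) := by
  intro a ha b hb hab
  have hlt := strictMonoOn_sub_one_div_add_one_cube ha hb hab
  have hnonneg : 0 ≤ (a - 1) / (a + 1) ^ 3 :=
    div_nonneg (by linarith [ha.1]) (pow_nonneg (by linarith [ha.1]) 3)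
  dsimp only
  gcongr

lemma strictAntiOn_two_mul_sqrt_sub_one_div_add_one_cube :
    StrictAntiOn (fun b : ℝ => 2 * √((b - 1) / (b + 1) ^ 3)) (Ici 2) := by
  intro a ha b (hb : 2 ≤ b) hab
  have hlt := strictAntiOn_sub_one_div_add_one_cube ha hb hab
  have hnonneg : 0 ≤ (b - 1) / (b + 1) ^ 3 :=
    div_nonneg (by linarith) (pow_nonneg (by linarith) 3)
  dsimp only
  gcongr

lemma rpow_three_halves_two_div_mul_sq_div_sqrt_two {b : ℝ} (hb : 1 < b) :
    (2 / (b ^ 2 - 1)) ^ ((3 : ℝ) / 2) * (b - 1) ^ 2 / √2 = 2 * √((b - 1) / (b + 1) ^ 3) := by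
  have hc : 0 ≤ 2 / (b ^ 2 - 1) := div_nonneg zero_le_two (by nlinarith)
  have hg : 0 ≤ (b - 1) / (b + 1) ^ 3 := div_nonneg (by linarith) (by positivity)
  have hc3 : (√(2 / (b ^ 2 - 1)) ^ 3) ^ 2 = (2 / (b ^ 2 - 1)) ^ 3 := by
    rw [pow_right_comm, sq_sqrt hc]
  rw [rpow_div_two_eq_sqrt 3 hc, rpow_ofNat, ← sq_eq_sq₀ (by positivity) (by positivity),
    div_pow, mul_pow, mul_pow, hc3, sq_sqrt hg, sq_sqrt zero_le_two]
  have : b ^ 2 - 1 ≠ 0 := by nlinarith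
  have : b + 1 ≠ 0 := by linarith
  field_simp
  ring

section

variable {lam : ℝ} (hlam : 0 < lam)
include hlam

lemma strictMonoOn_sqrt_one_add_two_mul_div :
    StrictMonoOn (fun s : ℝ => √(1 + 2 * s / lam)) (Ici (-(lam / 2))) := by
  intro x (hx : -(lam / 2) ≤ x) y _ hxy
  have : 0 ≤ 1 + 2 * x / lam := by
    rw [← neg_le_iff_add_nonneg', le_div_iff₀ hlam]
    linarith
  exact sqrt_lt_sqrt this (by gcongr)

lemma mapsTo_sqrt_one_add_two_mul_div_Ioo :
    MapsTo (fun s : ℝ => √(1 + 2 * s / lam)) (Ioo 0 (3 / 2 * lam)) (Icc 1 2) := by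
  rintro s ⟨hs0, hs⟩
  have : 0 < 2 * s / lam := by positivity
  have : 2 * s / lam < 3 := by rw [div_lt_iff₀ hlam]; linarith
  constructor
  · rw [le_sqrt' zero_lt_one]; linarith
  · rw [sqrt_le_left zero_le_two]; linarith

lemma mapsTo_sqrt_one_add_two_mul_div_Ioi :
    MapsTo (fun s : ℝ => √(1 + 2 * s / lam)) (Ioi (3 / 2 * lam)) (Ici 2) := by
  intro s (hs : 3 / 2 * lam < s)
  have : 3 < 2 * s / lam := by rw [lt_div_iff₀ hlam]; linarith
  rw [mem_Ici, le_sqrt' zero_lt_two]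
  linarith

end

lemma div_eq_two_div_sqrt_one_add_two_mul_div_sq_sub_one {lam s : ℝ}
    (hs : 0 ≤ 1 + 2 * s / lam) : lam / s = 2 / (√(1 + 2 * s / lam) ^ 2 - 1) := by
  rw [sq_sqrt hs, add_sub_cancel_left, div_div_eq_mul_div, mul_div_mul_left _ _ two_ne_zero]

lemma pif_eq_two_mul_sqrt {lam s : ℝ} (hlam : 0 < lam) (hs : 0 < s) :
    (lam / s) ^ ((3 : ℝ) / 2) * (√(1 + 2 * s / lam) - 1) ^ 2 / √2
      = 2 * √((√(1 + 2 * s / lam) - 1) / (√(1 + 2 * s / lam) + 1) ^ 3) := by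
  have hpos : 0 < 2 * s / lam := by positivity
  have hβ : 1 < √(1 + 2 * s / lam) := by rw [lt_sqrt zero_le_one]; linarith
  rw [div_eq_two_div_sqrt_one_add_two_mul_div_sq_sub_one (s := s) (by positivity)]
  exact rpow_three_halves_two_div_mul_sq_div_sqrt_two hβ

/-- For fixed `λ > 0`, the partial information factor
`SNR ↦ PIF(SNR, λ) = (λ/SNR)^{3/2}(√(1 + 2·SNR/λ) - 1)²/√2` is strictly increasing on
`(0, (3/2)λ)` and strictly decreasing on `((3/2)λ, ∞)`. -/
theorem PIF_unimodal_in_SNR (lam : ℝ) (hlam : 0 < lam) :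
    StrictMonoOn
      (fun SNR : ℝ =>
        (lam / SNR) ^ ((3 : ℝ) / 2) * (Real.sqrt (1 + 2 * SNR / lam) - 1) ^ 2
          / Real.sqrt 2)
      (Set.Ioo 0 (3 / 2 * lam)) ∧
    StrictAntiOn
      (fun SNR : ℝ =>
        (lam / SNR) ^ ((3 : ℝ) / 2) * (Real.sqrt (1 + 2 * SNR / lam) - 1) ^ 2
          / Real.sqrt 2)
      (Set.Ioi (3 / 2 * lam)) := by
  have hpif : EqOn
      (fun SNR : ℝ => (lam / SNR) ^ ((3 : ℝ) / 2) * (√(1 + 2 * SNR / lam) - 1) ^ 2 / √2)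
      ((fun b : ℝ => 2 * √((b - 1) / (b + 1) ^ 3)) ∘ fun SNR : ℝ => √(1 + 2 * SNR / lam))
      (Ioi 0) :=
    fun s hs => pif_eq_two_mul_sqrt hlam hs
  have hβ : StrictMonoOn (fun s : ℝ => √(1 + 2 * s / lam)) (Ioi 0) :=
    (strictMonoOn_sqrt_one_add_two_mul_div hlam).mono
      (Ioi_subset_Ici (by linarith))
  have hsub : Ioi (3 / 2 * lam) ⊆ Ioi 0 := Ioi_subset_Ioi (by positivity)
  constructor
  · rw [(hpif.mono Ioo_subset_Ioi_self).congr_strictMonoOn]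
    exact strictMonoOn_two_mul_sqrt_sub_one_div_add_one_cube.comp
      (hβ.mono Ioo_subset_Ioi_self) (mapsTo_sqrt_one_add_two_mul_div_Ioo hlam)
  · rw [(hpif.mono hsub).congr_strictAntiOn]
    exact strictAntiOn_two_mul_sqrt_sub_one_div_add_one_cube.comp_strictMonoOn
      (hβ.mono hsub) (mapsTo_sqrt_one_add_two_mul_div_Ioi hlam)
end
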